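/- arXiv:2309.08553 — 7 statements merged into one kernel-verified Lean document; each statement's English description precedes it below -/
import Mathlib

section
/- The interval [1,50] of integers can be partitioned into 6 Sidon sets, namely {4,6,14,28,29,33,40,46,49}, {2,5,11,18,22,23,37,45,47}, {3,7,8,24,30,32,39,42}, {1,13,15,26,31,34,35,41}, {9,12,19,21,27,43,44,48}, {10,16,17,20,25,36,38,50}. -/
/-! Each part is shown to be Sidon by checking that its sums `a + b` with `a ≤ b` are pairwise
distinct, i.e. that the sum map is injective on these pairs, which is a cardinality comparison of
finite sets; disjointness and the covering of `[1, 50]` are likewise finite computations. -/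

/-- A set of integers is a Sidon set if `a+b = c+d` with all four in `S`
implies `{a,b} = {c,d}`. -/
def IsSidon (S : Set ℤ) : Prop :=
  ∀ a ∈ S, ∀ b ∈ S, ∀ c ∈ S, ∀ d ∈ S, a + b = c + d → ({a, b} : Set ℤ) = {c, d}

open Function

theorem Matrix.comp_vecCons {α β : Type*} {n : ℕ} (g : α → β) (a : α) (v : Fin n → α) :
    g ∘ Matrix.vecCons a v = Matrix.vecCons (g a) (g ∘ v) :=
  Fin.comp_cons g a v

theorem isSidon_iff_injOn_add {S : Set ℤ} :
    IsSidon S ↔ Set.InjOn (fun p : ℤ × ℤ ↦ p.1 + p.2) {p | p.1 ∈ S ∧ p.2 ∈ S ∧ p.1 ≤ p.2} := by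
  constructor
  · rintro hS ⟨a, b⟩ ⟨ha, hb, hab⟩ ⟨c, d⟩ ⟨hc, hd, hcd⟩ hsum
    have := Set.pair_eq_pair_iff.1 (hS a ha b hb c hc d hd hsum)
    simp only [Prod.mk.injEq]
    omega
  · intro hinj a ha b hb c hc d hd hsum
    have sorted : ∀ {a b c d}, a ∈ S → b ∈ S → c ∈ S → d ∈ S → a ≤ b → c ≤ d → a + b = c + d →
        a = c ∧ b = d := fun ha hb hc hd hab hcd hsum ↦
      Prod.mk.inj (hinj ⟨ha, hb, hab⟩ ⟨hc, hd, hcd⟩ hsum)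
    rw [Set.pair_eq_pair_iff]
    rcases le_total a b with hab | hab <;> rcases le_total c d with hcd | hcd
    · have := sorted ha hb hc hd hab hcd hsum; omega
    · have := sorted ha hb hd hc hab hcd (by omega); omega
    · have := sorted hb ha hc hd hab hcd (by omega); omega
    · have := sorted hb ha hd hc hab hcd (by omega); omega

theorem isSidon_coe_iff_card_image {s : Finset ℤ} :
    IsSidon (s : Set ℤ) ↔
      ({p ∈ s ×ˢ s | p.1 ≤ p.2}.image fun p ↦ p.1 + p.2).card = {p ∈ s ×ˢ s | p.1 ≤ p.2}.card := by
  rw [Finset.card_image_iff, isSidon_iff_injOn_add]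
  simp only [Finset.coe_filter, Finset.mem_product, Finset.mem_coe, and_assoc]

instance (s : Finset ℤ) : Decidable (IsSidon (s : Set ℤ)) :=
  decidable_of_iff' _ isSidon_coe_iff_card_image

def IsSidonRamseyPartition (n : ℕ) {k : ℕ} (P : Fin k → Set ℤ) : Prop :=
  (∀ i, IsSidon (P i)) ∧ Pairwise (Disjoint on P) ∧ ⋃ i, P i = Set.Icc 1 (n : ℤ)

theorem isSidonRamseyPartition_coe_comp_iff {n k : ℕ} {P : Fin k → Finset ℤ} :
    IsSidonRamseyPartition n ((↑) ∘ P) ↔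
      (∀ i, IsSidon (P i : Set ℤ)) ∧ (∀ i j, i ≠ j → Disjoint (P i) (P j)) ∧
        Finset.univ.biUnion P = Finset.Icc 1 (n : ℤ) := by
  simp only [IsSidonRamseyPartition, Pairwise, onFun, comp_apply, Finset.disjoint_coe,
    ← Finset.coe_Icc, ← Finset.coe_inj, Finset.coe_biUnion, Finset.coe_univ, Set.mem_univ,
    Set.iUnion_true]

def sidonRamseyPartition50 : Fin 6 → Finset ℤ :=
  ![{4, 6, 14, 28, 29, 33, 40, 46, 49}, {2, 5, 11, 18, 22, 23, 37, 45, 47},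
    {3, 7, 8, 24, 30, 32, 39, 42}, {1, 13, 15, 26, 31, 34, 35, 41},
    {9, 12, 19, 21, 27, 43, 44, 48}, {10, 16, 17, 20, 25, 36, 38, 50}]

theorem isSidonRamseyPartition_sidonRamseyPartition50 :
    IsSidonRamseyPartition 50 ((↑) ∘ sidonRamseyPartition50) :=
  -- `+kernel`: the elaborator's `decide` would run the same computation a second time
  isSidonRamseyPartition_coe_comp_iff.2 (by decide +kernel)

theorem partition_50_into_6_sidon :
    (IsSidon ({4,6,14,28,29,33,40,46,49} : Set ℤ)) ∧
    (IsSidon ({2,5,11,18,22,23,37,45,47} : Set ℤ)) ∧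
    (IsSidon ({3,7,8,24,30,32,39,42} : Set ℤ)) ∧
    (IsSidon ({1,13,15,26,31,34,35,41} : Set ℤ)) ∧
    (IsSidon ({9,12,19,21,27,43,44,48} : Set ℤ)) ∧
    (IsSidon ({10,16,17,20,25,36,38,50} : Set ℤ)) ∧
    (∀ i j : Fin 6, i ≠ j → Disjoint
      (![({4,6,14,28,29,33,40,46,49} : Set ℤ),
         {2,5,11,18,22,23,37,45,47},
         {3,7,8,24,30,32,39,42},
         {1,13,15,26,31,34,35,41},
         {9,12,19,21,27,43,44,48},
         {10,16,17,20,25,36,38,50}] i)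
      (![({4,6,14,28,29,33,40,46,49} : Set ℤ),
         {2,5,11,18,22,23,37,45,47},
         {3,7,8,24,30,32,39,42},
         {1,13,15,26,31,34,35,41},
         {9,12,19,21,27,43,44,48},
         {10,16,17,20,25,36,38,50}] j)) ∧
    ((⋃ i, ![({4,6,14,28,29,33,40,46,49} : Set ℤ),
         {2,5,11,18,22,23,37,45,47},
         {3,7,8,24,30,32,39,42},
         {1,13,15,26,31,34,35,41},
         {9,12,19,21,27,43,44,48},
         {10,16,17,20,25,36,38,50}] i) = Set.Icc (1 : ℤ) 50) := by
  obtain ⟨hSidon, hDisjoint, hCover⟩ := isSidonRamseyPartition_sidonRamseyPartition50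
  simp only [sidonRamseyPartition50, Matrix.comp_vecCons, Finset.coe_insert, Finset.coe_singleton,
    Matrix.empty_eq (_ ∘ ![])] at hSidon hDisjoint hCover
  exact ⟨hSidon 0, hSidon 1, hSidon 2, hSidon 3, hSidon 4, hSidon 5, hDisjoint, hCover⟩
end

section
/- The interval [1,65] can be partitioned into 7 Sidon sets, namely {1,3,15,22,30,33,46,50,55,56}, {2,9,17,21,26,27,47,49,60,63}, {4,7,13,23,24,28,36,54,61}, {5,12,14,20,34,44,45,57,62}, {6,10,16,29,38,41,43,58,59}, {8,25,31,32,35,40,51,53,65}, {11,18,19,37,39,42,48,52,64}. -/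
def Sym2.sum {α : Type*} [AddCommMagma α] : Sym2 α → α :=
  Sym2.lift ⟨(· + ·), add_comm⟩

theorem isSidon_iff_injOn_sum {S : Set ℤ} : IsSidon S ↔ S.sym2.InjOn Sym2.sum := by
  constructor
  · rintro h ⟨a, b⟩ ⟨ha, hb⟩ ⟨c, d⟩ ⟨hc, hd⟩ hsum
    exact Sym2.eq_iff.2 (Set.pair_eq_pair_iff.1 (h a ha b hb c hc d hd hsum))
  · intro h a ha b hb c hc d hd hsum
    exact Set.pair_eq_pair_iff.2 <| Sym2.eq_iff.1 <|
      h (Set.mk_mem_sym2_iff.2 ⟨ha, hb⟩) (Set.mk_mem_sym2_iff.2 ⟨hc, hd⟩) hsum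

theorem isSidon_coe_iff_card_image_sum {s : Finset ℤ} :
    IsSidon s ↔ (s.sym2.image Sym2.sum).card = s.sym2.card := by
  rw [Finset.card_image_iff, Finset.coe_sym2, isSidon_iff_injOn_sum]

def sidonParts : Fin 7 → Finset ℤ :=
  ![{1,3,15,22,30,33,46,50,55,56},
    {2,9,17,21,26,27,47,49,60,63},
    {4,7,13,23,24,28,36,54,61},
    {5,12,14,20,34,44,45,57,62},
    {6,10,16,29,38,41,43,58,59},
    {8,25,31,32,35,40,51,53,65},
    {11,18,19,37,39,42,48,52,64}]

theorem isSidon_sidonParts (i : Fin 7) : IsSidon (sidonParts i) :=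
  isSidon_coe_iff_card_image_sum.2 (by revert i; decide)

open Function in
theorem pairwise_disjoint_sidonParts : Pairwise (Disjoint on sidonParts) := by
  unfold Pairwise Function.onFun
  decide

theorem biUnion_sidonParts : Finset.univ.biUnion sidonParts = Finset.Icc 1 65 := by
  decide

theorem coe_sidonParts (i : Fin 7) :
    (sidonParts i : Set ℤ) =
      ![({1,3,15,22,30,33,46,50,55,56} : Set ℤ),
        {2,9,17,21,26,27,47,49,60,63},
        {4,7,13,23,24,28,36,54,61},
        {5,12,14,20,34,44,45,57,62},
        {6,10,16,29,38,41,43,58,59},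
        {8,25,31,32,35,40,51,53,65},
        {11,18,19,37,39,42,48,52,64}] i := by
  fin_cases i <;> simp [sidonParts]

theorem partition_65_into_7_sidon :
    (IsSidon ({1,3,15,22,30,33,46,50,55,56} : Set ℤ)) ∧
    (IsSidon ({2,9,17,21,26,27,47,49,60,63} : Set ℤ)) ∧
    (IsSidon ({4,7,13,23,24,28,36,54,61} : Set ℤ)) ∧
    (IsSidon ({5,12,14,20,34,44,45,57,62} : Set ℤ)) ∧
    (IsSidon ({6,10,16,29,38,41,43,58,59} : Set ℤ)) ∧
    (IsSidon ({8,25,31,32,35,40,51,53,65} : Set ℤ)) ∧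
    (IsSidon ({11,18,19,37,39,42,48,52,64} : Set ℤ)) ∧
    (∀ i j : Fin 7, i ≠ j → Disjoint
      (![({1,3,15,22,30,33,46,50,55,56} : Set ℤ),
         {2,9,17,21,26,27,47,49,60,63},
         {4,7,13,23,24,28,36,54,61},
         {5,12,14,20,34,44,45,57,62},
         {6,10,16,29,38,41,43,58,59},
         {8,25,31,32,35,40,51,53,65},
         {11,18,19,37,39,42,48,52,64}] i)
      (![({1,3,15,22,30,33,46,50,55,56} : Set ℤ),
         {2,9,17,21,26,27,47,49,60,63},
         {4,7,13,23,24,28,36,54,61},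
         {5,12,14,20,34,44,45,57,62},
         {6,10,16,29,38,41,43,58,59},
         {8,25,31,32,35,40,51,53,65},
         {11,18,19,37,39,42,48,52,64}] j)) ∧
    ((⋃ i, ![({1,3,15,22,30,33,46,50,55,56} : Set ℤ),
         {2,9,17,21,26,27,47,49,60,63},
         {4,7,13,23,24,28,36,54,61},
         {5,12,14,20,34,44,45,57,62},
         {6,10,16,29,38,41,43,58,59},
         {8,25,31,32,35,40,51,53,65},
         {11,18,19,37,39,42,48,52,64}] i) = Set.Icc (1 : ℤ) 65) := by
  have hSidon i := coe_sidonParts i ▸ isSidon_sidonParts i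
  refine ⟨hSidon 0, hSidon 1, hSidon 2, hSidon 3, hSidon 4, hSidon 5, hSidon 6, ?_, ?_⟩
  · intro i j hij
    rw [← coe_sidonParts, ← coe_sidonParts, Finset.disjoint_coe]
    exact pairwise_disjoint_sidonParts hij
  · simp_rw [← coe_sidonParts, ← Finset.coe_Icc, ← biUnion_sidonParts, Finset.coe_biUnion,
      Finset.coe_univ, Set.biUnion_univ]
end

section
/- Every Sidon set contained in [1,51] has at most 9 elements, i.e., F₂(51) ≤ 9. -/
open Finset

def DistinctDiffs (A : Set ℕ) : Prop :=
  ∀ ⦃a b c d⦄, a ∈ A → b ∈ A → c ∈ A → d ∈ A → b < a → d < c → a - b = c - d → a = c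

theorem DistinctDiffs.mono {A B : Set ℕ} (hB : DistinctDiffs B) (hAB : A ⊆ B) :
    DistinctDiffs A :=
  fun _ _ _ _ ha hb hc hd => hB (hAB ha) (hAB hb) (hAB hc) (hAB hd)

theorem IsSidon.distinctDiffs_shift {S : Set ℤ} (hS : IsSidon S) (μ : ℤ) :
    DistinctDiffs {n : ℕ | μ + n ∈ S} := by
  intro a b c d ha hb hc hd hba hdc hdiff
  have hpair := hS _ ha _ hd _ hc _ hb (by omega)
  have hmem : μ + (a : ℤ) ∈ ({μ + (c : ℤ), μ + (b : ℤ)} : Set ℤ) := hpair ▸ Set.mem_insert _ _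
  rcases hmem with h | h
  · omega
  · rw [Set.mem_singleton_iff] at h
    omega

def gaps : List ℕ → List ℕ
  | a :: b :: l => (b - a) :: gaps (b :: l)
  | _ => []

theorem length_gaps : ∀ l : List ℕ, (gaps l).length = l.length - 1
  | [] | [_] => rfl
  | a :: b :: l => by simp [gaps, length_gaps (b :: l)]

theorem add_sum_gaps_mem : ∀ (a : ℕ) (l : List ℕ), (a :: l).Pairwise (· ≤ ·) →
    a + (gaps (a :: l)).sum ∈ a :: l
  | a, [], _ => by simp [gaps]
  | a, b :: l, h => by
    have hab : a ≤ b := List.rel_of_pairwise_cons h List.mem_cons_self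
    have ih := add_sum_gaps_mem b l h.of_cons
    simp only [gaps, List.sum_cons] at ih ⊢
    rw [← add_assoc, Nat.add_sub_cancel' hab]
    exact List.mem_cons_of_mem _ ih

theorem exists_of_mem_gaps {d : ℕ} : ∀ {l : List ℕ}, l.Pairwise (· < ·) → d ∈ gaps l →
    ∃ p ∈ l, ∃ q ∈ l, p < q ∧ q - p = d
  | [], _, hd | [_], _, hd => by simp [gaps] at hd
  | a :: b :: l, h, hd => by
    rcases List.mem_cons.mp hd with rfl | hd
    · exact ⟨a, List.mem_cons_self, b, List.mem_cons_of_mem _ List.mem_cons_self,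
        List.rel_of_pairwise_cons h List.mem_cons_self, rfl⟩
    · obtain ⟨p, hp, q, hq, hpq, rfl⟩ := exists_of_mem_gaps h.of_cons hd
      exact ⟨p, List.mem_cons_of_mem _ hp, q, List.mem_cons_of_mem _ hq, hpq, rfl⟩

theorem nodup_gaps {A : Set ℕ} (hA : DistinctDiffs A) : ∀ {l : List ℕ},
    l.Pairwise (· < ·) → (∀ y ∈ l, y ∈ A) → (gaps l).Nodup
  | [], _, _ | [_], _, _ => by simp [gaps]
  | a :: b :: l, h, hl => by
    refine List.nodup_cons.mpr
      ⟨fun hmem => ?_, nodup_gaps hA h.of_cons fun y hy => hl y (.tail _ hy)⟩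
    obtain ⟨p, hp, q, hq, hpq, hdiff⟩ := exists_of_mem_gaps h.of_cons hmem
    have hab : a < b := List.rel_of_pairwise_cons h List.mem_cons_self
    have hbp : b ≤ p := by
      rcases List.mem_cons.mp hp with rfl | hp
      · rfl
      · exact (List.rel_of_pairwise_cons h.of_cons hp).le
    have := hA (hl q (.tail _ hq)) (hl p (.tail _ hp)) (hl b (.tail _ (.head _))) (hl a (.head _))
      hpq hab hdiff
    omega

def diffMask (x : ℕ) : List ℕ → ℕ
  | [] => 0
  | m :: ms => 1 <<< (x - m) ||| diffMask x ms

theorem testBit_diffMask {x d : ℕ} :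
    ∀ {ms : List ℕ}, (diffMask x ms).testBit d = true ↔ ∃ m ∈ ms, x - m = d
  | [] => by simp [diffMask]
  | m :: ms => by
    simp [diffMask, Nat.one_shiftLeft, Nat.testBit_two_pow, testBit_diffMask]

/- The search functions below are written with recursors rather than by pattern matching, and
test bits as `(ds >>> d) &&& 1 == 0` rather than with `Nat.testBit`: the kernel evaluates this
form markedly faster. -/

/-- `freeSum ds f c t` is the sum of the first `c` numbers `d > t` whose bit `d` in `ds` is clear,
looking at no more than `f` candidates. -/
def freeSum (ds : ℕ) : ℕ → ℕ → ℕ → ℕ :=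
  Nat.rec (fun _ _ => 0) fun _ ih c t =>
    Nat.rec 0 (fun c' _ =>
      cond ((ds >>> (t + 1)) &&& 1 == 0) (t + 1 + ih c' (t + 1)) (ih (c' + 1) (t + 1))) c

theorem shiftRight_and_one_beq_zero (ds d : ℕ) : ((ds >>> d) &&& 1 == 0) = !ds.testBit d := by
  rcases Nat.mod_two_eq_zero_or_one (ds >>> d) with h | h <;> simp [Nat.testBit, Nat.and_comm, h]

theorem freeSum_succ_succ (ds f c t : ℕ) :
    freeSum ds (f + 1) (c + 1) t = if ds.testBit (t + 1) then freeSum ds f (c + 1) (t + 1)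
      else t + 1 + freeSum ds f c (t + 1) := by
  change cond _ _ _ = _
  rw [shiftRight_and_one_beq_zero]
  cases ds.testBit (t + 1) <;> rfl

theorem freeSum_le_sum (ds : ℕ) : ∀ (f c t : ℕ) (T : Finset ℕ),
    (∀ d ∈ T, t < d ∧ ds.testBit d = false) → c ≤ #T → freeSum ds f c t ≤ ∑ d ∈ T, d
  | 0, _, _, _, _, _ | _ + 1, 0, _, _, _, _ => Nat.zero_le _
  | f + 1, c + 1, t, T, hT, hc => by
    have hne : T.Nonempty := card_pos.mp (by omega)
    rw [freeSum_succ_succ]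
    split_ifs with hbit
    · refine freeSum_le_sum ds f (c + 1) (t + 1) T (fun d hd => ?_) hc
      obtain ⟨htd, hd⟩ := hT d hd
      refine ⟨lt_of_le_of_ne htd ?_, hd⟩
      rintro rfl
      simp [hbit] at hd
    · have hmin := min'_mem T hne
      have hle : t + 1 ≤ T.min' hne := (hT _ hmin).1
      rw [← add_sum_erase T _ hmin]
      gcongr
      refine freeSum_le_sum ds f c (t + 1) _ (fun d hd => ?_)
        (by rw [card_erase_of_mem hmin]; omega)
      obtain ⟨hne', hdT⟩ := mem_erase.mp hd
      exact ⟨lt_of_le_of_lt hle (lt_of_le_of_ne (min'_le T d hdT) hne'.symm), (hT d hdT).2⟩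

def anyFrom (p : ℕ → Bool) : ℕ → ℕ → Bool :=
  Nat.rec (fun _ => false) fun _ ih x => p x || ih (x + 1)

theorem anyFrom_eq_true_iff {p : ℕ → Bool} :
    ∀ {len lo : ℕ}, anyFrom p len lo = true ↔ ∃ x, lo ≤ x ∧ x < lo + len ∧ p x = true
  | 0, lo => by simp [anyFrom]; omega
  | len + 1, lo => by
    change (p lo || anyFrom p len (lo + 1)) = true ↔ _
    rw [Bool.or_eq_true, anyFrom_eq_true_iff]
    constructor
    · rintro (h | ⟨x, h₁, h₂, hx⟩)
      · exact ⟨lo, le_rfl, by omega, h⟩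
      · exact ⟨x, by omega, by omega, hx⟩
    · rintro ⟨x, h₁, h₂, hx⟩
      rcases h₁.eq_or_lt with rfl | h₁
      · exact .inl hx
      · exact .inr ⟨x, h₁, by omega, hx⟩

/-- `canExtend n k ms ds lo`: can `k` marks in `[lo, n]` be added to the marks `ms`, whose
differences form the bitmask `ds`, keeping all differences distinct? A candidate `x` for the next
mark is tried only if `x` plus the sum of the `k - 1` smallest positive numbers missing from `ds`
is at most `n`. -/
def canExtend (n : ℕ) : ℕ → List ℕ → ℕ → ℕ → Bool :=
  Nat.rec (fun _ _ _ => true) fun k ih ms ds lo =>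
    anyFrom (fun x => ds &&& diffMask x ms == 0 && ih (x :: ms) (ds ||| diffMask x ms) (x + 1))
      (n + 1 - freeSum ds n k 0 - lo) lo

theorem canExtend_succ (n k : ℕ) (ms : List ℕ) (ds lo : ℕ) :
    canExtend n (k + 1) ms ds lo =
      anyFrom (fun x => ds &&& diffMask x ms == 0 &&
          canExtend n k (x :: ms) (ds ||| diffMask x ms) (x + 1))
        (n + 1 - freeSum ds n k 0 - lo) lo :=
  rfl

theorem canExtend_succ_eq_false {n k : ℕ} {ms : List ℕ} {ds lo : ℕ}
    (h : ∀ x, lo ≤ x → x + freeSum ds n k 0 ≤ n →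
      canExtend n k (x :: ms) (ds ||| diffMask x ms) (x + 1) = false) :
    canExtend n (k + 1) ms ds lo = false := by
  rw [canExtend_succ, ← Bool.not_eq_true, anyFrom_eq_true_iff]
  rintro ⟨x, h₁, h₂, hx⟩
  rw [h x h₁ (by omega), Bool.and_false] at hx
  exact Bool.false_ne_true hx

section Completeness

variable {A : Set ℕ} {n : ℕ}

def DiffsBelow (A : Set ℕ) (lo ds : ℕ) : Prop :=
  ∀ d, ds.testBit d = true → ∃ a ∈ A, ∃ b ∈ A, b < a ∧ a < lo ∧ a - b = d

theorem DiffsBelow.testBit_eq_false (hA : DistinctDiffs A) {lo ds : ℕ} (hds : DiffsBelow A lo ds)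
    {p q : ℕ} (hp : p ∈ A) (hq : q ∈ A) (hpq : p < q) (hlo : lo ≤ q) :
    ds.testBit (q - p) = false := by
  refine Bool.eq_false_iff.mpr fun h => ?_
  obtain ⟨a, ha, b, hb, hba, halo, hab⟩ := hds _ h
  have := hA hq hp ha hb hpq hba hab.symm
  omega

theorem DiffsBelow.land_diffMask (hA : DistinctDiffs A) {lo ds x : ℕ} {ms : List ℕ}
    (hds : DiffsBelow A lo ds) (hx : x ∈ A) (hlo : lo ≤ x) (hms : ∀ m ∈ ms, m ∈ A ∧ m < lo) :
    ds &&& diffMask x ms = 0 := by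
  refine Nat.eq_of_testBit_eq fun d => ?_
  rw [Nat.testBit_land, Nat.zero_testBit, Bool.and_eq_false_iff, or_iff_not_imp_right,
    Bool.not_eq_false, testBit_diffMask]
  rintro ⟨m, hm, rfl⟩
  exact hds.testBit_eq_false hA (hms m hm).1 hx ((hms m hm).2.trans_le hlo) hlo

theorem DiffsBelow.lor_diffMask {lo ds x : ℕ} {ms : List ℕ} (hds : DiffsBelow A lo ds)
    (hx : x ∈ A) (hlo : lo ≤ x) (hms : ∀ m ∈ ms, m ∈ A ∧ m < lo) :
    DiffsBelow A (x + 1) (ds ||| diffMask x ms) := by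
  intro d hd
  rcases Bool.or_eq_true_iff.mp (Nat.testBit_lor .. ▸ hd) with hd | hd
  · obtain ⟨a, ha, b, hb, hba, halo, rfl⟩ := hds d hd
    exact ⟨a, ha, b, hb, hba, by omega, rfl⟩
  · obtain ⟨m, hm, rfl⟩ := testBit_diffMask.mp hd
    have hm := hms m hm
    exact ⟨x, hx, m, hm.1, by omega, by omega, rfl⟩

theorem DiffsBelow.add_freeSum_le (hA : DistinctDiffs A) (hn : ∀ a ∈ A, a ≤ n) {lo ds k x : ℕ}
    {xs : List ℕ} (hds : DiffsBelow A lo ds) (hsort : (x :: xs).Pairwise (· < ·))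
    (hxs : ∀ y ∈ x :: xs, y ∈ A ∧ lo ≤ y) (hk : k ≤ xs.length) :
    x + freeSum ds n k 0 ≤ n := by
  set G := gaps (x :: xs)
  have hG : G.Nodup := nodup_gaps hA hsort fun y hy => (hxs y hy).1
  have hfree : ∀ d ∈ G.toFinset, 0 < d ∧ ds.testBit d = false := by
    intro d hd
    obtain ⟨p, hp, q, hq, hpq, rfl⟩ := exists_of_mem_gaps hsort (List.mem_toFinset.mp hd)
    exact ⟨by omega, hds.testBit_eq_false hA (hxs p hp).1 (hxs q hq).1 hpq (hxs q hq).2⟩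
  have hsum : freeSum ds n k 0 ≤ G.sum := by
    have hcard : k ≤ #G.toFinset := by
      rw [List.toFinset_card_of_nodup hG, length_gaps]
      simpa using hk
    simpa [List.sum_toFinset _ hG] using freeSum_le_sum ds n k 0 _ hfree hcard
  have hlast := add_sum_gaps_mem x xs (hsort.imp le_of_lt)
  linarith [hn _ (hxs _ hlast).1]

theorem canExtend_eq_true (hA : DistinctDiffs A) (hn : ∀ a ∈ A, a ≤ n) :
    ∀ {k : ℕ} {xs ms : List ℕ} {ds lo : ℕ}, xs.Pairwise (· < ·) → k ≤ xs.length →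
      (∀ y ∈ xs, y ∈ A ∧ lo ≤ y) → (∀ m ∈ ms, m ∈ A ∧ m < lo) → DiffsBelow A lo ds →
      canExtend n k ms ds lo = true
  | 0, _, _, _, _, _, _, _, _, _ => rfl
  | _ + 1, [], _, _, _, _, hk, _, _, _ => by simp at hk
  | k + 1, x :: xs, ms, ds, lo, hsort, hk, hxs, hms, hds => by
    obtain ⟨hx, hlo⟩ := hxs x List.mem_cons_self
    have hbound := hds.add_freeSum_le hA hn hsort hxs (by simpa using hk)
    rw [canExtend_succ]
    refine anyFrom_eq_true_iff.mpr ⟨x, hlo, by omega, ?_⟩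
    rw [hds.land_diffMask hA hx hlo hms, beq_self_eq_true, Bool.true_and]
    refine canExtend_eq_true hA hn hsort.of_cons (by simpa using hk) (fun y hy => ?_)
      (fun m hm => ?_) (hds.lor_diffMask hx hlo hms)
    · exact ⟨(hxs y (.tail _ hy)).1, List.rel_of_pairwise_cons hsort hy⟩
    · rcases List.mem_cons.mp hm with rfl | hm
      · exact ⟨hx, by omega⟩
      · have hm := hms m hm
        exact ⟨hm.1, by omega⟩

end Completeness

theorem DistinctDiffs.card_le_of_canExtend_eq_false {A : Finset ℕ} {n k : ℕ}
    (hA : DistinctDiffs (A : Set ℕ)) (h0 : 0 ∈ A) (hn : ∀ a ∈ A, a ≤ n)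
    (hsearch : canExtend n k [0] 0 1 = false) :
    #A ≤ k := by
  by_contra! hk
  set xs := (A.erase 0).sort (· ≤ ·)
  have hxs : ∀ y ∈ xs, y ∈ A ∧ 1 ≤ y := by
    intro y hy
    obtain ⟨hy0, hyA⟩ := mem_erase.mp ((mem_sort _).mp hy)
    exact ⟨hyA, Nat.one_le_iff_ne_zero.mpr hy0⟩
  have hlen : k ≤ xs.length := by
    rw [length_sort, card_erase_of_mem h0]
    omega
  have := canExtend_eq_true (n := n) (ms := [0]) (ds := 0) hA (by simpa using hn)
    (A.erase 0).sortedLT_sort.pairwise hlen (fun y hy => by simpa using hxs y hy)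
    (by simpa using h0) (by simp [DiffsBelow])
  rw [hsearch] at this
  exact Bool.false_ne_true this

theorem IsSidon.card_le_of_canExtend_eq_false {S : Finset ℤ} {m : ℤ} {n k : ℕ}
    (hsub : (S : Set ℤ) ⊆ Set.Icc m (m + n)) (hS : IsSidon (S : Set ℤ))
    (hsearch : canExtend n k [0] 0 1 = false) : #S ≤ k := by
  rcases S.eq_empty_or_nonempty with rfl | hne
  · simp
  set μ := S.min' hne
  have hμ : m ≤ μ := (hsub (S.min'_mem hne)).1
  have hS_Icc : ∀ a ∈ S, μ ≤ a ∧ a ≤ m + n := fun a ha => ⟨S.min'_le a ha, (hsub ha).2⟩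
  set A := (range (n + 1)).filter fun i : ℕ => μ + i ∈ S
  have hcard : #S ≤ #A := by
    refine card_le_card_of_injOn (fun a => (a - μ).toNat) (fun a ha => ?_) (fun a ha b hb hab => ?_)
    · obtain ⟨h₁, h₂⟩ := hS_Icc a ha
      simp only [coe_filter, mem_range, Set.mem_ofPred_eq, A]
      exact ⟨by omega, by rwa [Int.toNat_of_nonneg (by omega), add_sub_cancel]⟩
    · have := hS_Icc a ha
      have := hS_Icc b hb
      simp only at hab
      omega
  have hA : DistinctDiffs (A : Set ℕ) :=
    (hS.distinctDiffs_shift μ).mono fun i hi => (mem_filter.mp hi).2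
  refine hcard.trans (hA.card_le_of_canExtend_eq_false ?_ (fun i hi => ?_) hsearch)
  · simpa [A, μ] using S.min'_mem hne
  · exact Nat.le_of_lt_succ (mem_range.mp (mem_filter.mp hi).1)

set_option maxHeartbeats 0 in
theorem canExtend_50_9 : canExtend 50 9 [0] 0 1 = false := by
  refine canExtend_succ_eq_false fun x _ hx => ?_
  have : freeSum 0 50 8 0 = 36 := by decide
  have : x ≤ 14 := by omega
  -- Deciding each second mark separately gives every kernel computation its own auxiliary
  -- lemma, which keeps the kernel's memory use small.
  interval_cases x <;> decide +kernel

theorem F2_51_le_9 (S : Finset ℤ) (hsub : (S : Set ℤ) ⊆ Set.Icc 1 51)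
    (hS : IsSidon (S : Set ℤ)) : S.card ≤ 9 :=
  hS.card_le_of_canExtend_eq_false (m := 1) (n := 50) (by norm_num [hsub]) canExtend_50_9
end

section
/- Every Sidon set contained in [1,86] has at most 12 elements, i.e., F₂(86) ≤ 12. -/
open Finset

theorem card_mul_card_add_one_le_two_mul_sum {ι : Type*} {s : Finset ι} {f : ι → ℤ}
    (hf : Set.InjOn f s) (hpos : ∀ i ∈ s, 0 < f i) :
    (#s : ℤ) * (#s + 1) ≤ 2 * ∑ i ∈ s, f i := by
  have gauss : ∀ n : ℕ, 2 * ∑ k ∈ range n, (1 + (k : ℤ)) = n * (n + 1) := by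
    intro n
    induction n with
    | zero => simp
    | succ n ih => push_cast [sum_range_succ, mul_add, ih]; ring
  have h := sum_range_le_sum (s := s.image f) (c := 1) fun x hx ↦ by
    obtain ⟨i, hi, rfl⟩ := mem_image.mp hx
    exact hpos i hi
  rw [card_image_of_injOn hf, sum_image hf] at h
  linarith [gauss #s]

theorem Finset.exists_strictMonoOn_Iic_mem {T : Finset ℤ} {m : ℕ} (hT : #T = m + 1) :
    ∃ a : ℕ → ℤ, StrictMonoOn a (Set.Iic m) ∧ ∀ k, a k ∈ T := by
  let e := T.orderEmbOfFin hT
  refine ⟨fun k ↦ e ⟨min k m, by omega⟩, fun i hi j hj hij ↦ ?_, fun k ↦ T.orderEmbOfFin_mem hT _⟩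
  simp only [Set.mem_Iic] at hi hj
  exact e.strictMono (by simp [Fin.lt_def]; omega)

theorem sum_range_sub_eq_sum_mul_gaps (a : ℕ → ℤ) (n : ℕ) :
    ∑ i ∈ range n, (a n - a i) = ∑ k ∈ range n, ((k : ℤ) + 1) * (a (k + 1) - a k) := by
  induction n with
  | zero => simp
  | succ n ih =>
    have split : ∑ i ∈ range (n + 1), (a (n + 1) - a i)
        = (n + 1) * (a (n + 1) - a n) + ∑ i ∈ range n, (a n - a i) := by
      calc ∑ i ∈ range (n + 1), (a (n + 1) - a i)
          = ∑ i ∈ range (n + 1), ((a (n + 1) - a n) + (a n - a i)) :=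
            sum_congr rfl fun _ _ ↦ by ring
        _ = _ := by
          rw [sum_add_distrib, sum_const, card_range, nsmul_eq_mul, sum_range_succ _ n, sub_self,
            add_zero]
          push_cast; ring
    rw [split, ih, sum_range_succ]; ring

def diffSum (a : ℕ → ℤ) (m : ℕ) : ℤ :=
  ∑ j ∈ range (m + 1), ∑ i ∈ range j, (a j - a i)

theorem diffSum_eq_sum_mul_gaps (a : ℕ → ℤ) (m : ℕ) :
    diffSum a m = ∑ k ∈ range m, ((k : ℤ) + 1) * (m - k) * (a (k + 1) - a k) := by
  unfold diffSum
  induction m with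
  | zero => simp
  | succ m ih =>
    have weights : ∑ k ∈ range m, ((k : ℤ) + 1) * (m + 1 - k) * (a (k + 1) - a k)
        = ∑ k ∈ range m, ((k : ℤ) + 1) * (m - k) * (a (k + 1) - a k)
          + ∑ k ∈ range m, ((k : ℤ) + 1) * (a (k + 1) - a k) := by
      rw [← sum_add_distrib]; exact sum_congr rfl fun _ _ ↦ by ring
    rw [sum_range_succ, ih, sum_range_sub_eq_sum_mul_gaps, sum_range_succ _ m, sum_range_succ _ m]
    push_cast
    rw [weights]; ring

theorem IsSidon.eq_of_sub_eq {S : Set ℤ} (hS : IsSidon S) {a b c d : ℤ} (ha : a ∈ S) (hb : b ∈ S)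
    (hc : c ∈ S) (hd : d ∈ S) (hba : b < a) (h : a - b = c - d) : a = c ∧ b = d := by
  have hac : a ∈ ({c, b} : Set ℤ) := hS a ha d hd c hc b hb (by linarith) ▸ Set.mem_insert a {d}
  rcases hac with rfl | rfl
  · exact ⟨rfl, by linarith⟩
  · exact absurd hba (lt_irrefl _)

namespace IsSidon

variable {S : Set ℤ} {a : ℕ → ℤ} {m : ℕ} (hS : IsSidon S) (hmono : StrictMonoOn a (Set.Iic m))
  (hmem : ∀ k ≤ m, a k ∈ S)
include hS hmono hmem

theorem eq_of_sub_eq_of_strictMonoOn {i j k l : ℕ} (hij : i < j) (hj : j ≤ m) (hk : k ≤ m)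
    (hl : l ≤ m) (h : a j - a i = a l - a k) : i = k ∧ j = l := by
  have hi : i ≤ m := by omega
  obtain ⟨hjl, hik⟩ := hS.eq_of_sub_eq (hmem j hj) (hmem i hi) (hmem l hl) (hmem k hk)
    (hmono (Set.mem_Iic.2 hi) (Set.mem_Iic.2 hj) hij) h
  exact ⟨hmono.injOn (Set.mem_Iic.2 hi) (Set.mem_Iic.2 hk) hik,
    hmono.injOn (Set.mem_Iic.2 hj) (Set.mem_Iic.2 hl) hjl⟩

theorem injOn_gaps : Set.InjOn (fun k ↦ a (k + 1) - a k) (range m) := fun k hk l hl h ↦ by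
  rw [coe_range, Set.mem_Iio] at hk hl
  exact (hS.eq_of_sub_eq_of_strictMonoOn hmono hmem k.lt_succ_self hk hl.le hl h).1

theorem choose_two_mul_succ_le_two_mul_diffSum :
    ((m + 1).choose 2 : ℤ) * ((m + 1).choose 2 + 1) ≤ 2 * diffSum a m := by
  have hcard : #((range (m + 1)).sigma range) = (m + 1).choose 2 := by
    simp [card_sigma, sum_range_id, Nat.choose_two_right]
  rw [diffSum, sum_sigma', ← hcard]
  apply card_mul_card_add_one_le_two_mul_sum
  · rintro ⟨j, i⟩ hp ⟨l, k⟩ hq h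
    simp only [coe_sigma, Set.mem_sigma_iff, coe_range, Set.mem_Iio] at hp hq
    dsimp only at h
    obtain ⟨rfl, rfl⟩ :=
      hS.eq_of_sub_eq_of_strictMonoOn hmono hmem hp.2 (by omega) (by omega) (by omega) h
    rfl
  · rintro ⟨j, i⟩ hp
    simp only [mem_sigma, mem_range] at hp
    dsimp only
    exact sub_pos.2 (hmono (Set.mem_Iic.2 (by omega)) (Set.mem_Iic.2 (by omega)) hp.2)

end IsSidon

theorem sum_mul_gaps_twelve_le {d : ℕ → ℤ} (hd : Set.InjOn d (range 12))
    (hpos : ∀ k ∈ range 12, 0 < d k) :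
    ∑ k ∈ range 12, ((k : ℤ) + 1) * (12 - k) * d k ≤ 42 * ∑ k ∈ range 12, d k - 490 := by
  have layer : ∀ L ⊆ range 12, (#L : ℤ) * (#L + 1) ≤ 2 * ∑ k ∈ L, d k := fun L hL ↦
    card_mul_card_add_one_le_two_mul_sum (hd.mono (coe_subset.2 hL)) fun k hk ↦ hpos k (hL hk)
  -- `42 - (k+1)(12-k)` is the sum of `2t` over the layers `t = 1, …, 5` below containing `k`.
  have h10 := layer {0, 1, 2, 3, 4, 7, 8, 9, 10, 11} (by decide)
  have h8 := layer {0, 1, 2, 3, 8, 9, 10, 11} (by decide)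
  have h6 := layer {0, 1, 2, 9, 10, 11} (by decide)
  have h4 := layer {0, 1, 10, 11} (by decide)
  have h2 := layer {0, 11} (by decide)
  simp only [sum_range_succ, sum_range_zero]
  norm_num at h10 h8 h6 h4 h2 ⊢
  linarith

theorem F2_86_le_12 (S : Finset ℤ) (hsub : (S : Set ℤ) ⊆ Set.Icc 1 86)
    (hS : IsSidon (S : Set ℤ)) : S.card ≤ 12 := by
  by_contra! hcard
  obtain ⟨T, hTS, hT⟩ := exists_subset_card_eq (show 12 + 1 ≤ #S by omega)
  obtain ⟨a, hmono, haT⟩ := exists_strictMonoOn_Iic_mem hT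
  have haS : ∀ k ≤ 12, a k ∈ (S : Set ℤ) := fun k _ ↦ hTS (haT k)
  have lower := hS.choose_two_mul_succ_le_two_mul_diffSum hmono haS
  have upper := sum_mul_gaps_twelve_le (hS.injOn_gaps hmono haS) fun k hk ↦
    sub_pos.2 (hmono (by simp at hk ⊢; omega) (by simp at hk ⊢; omega) k.lt_succ_self)
  have gap_sum : diffSum a 12 = ∑ k ∈ range 12, ((k : ℤ) + 1) * (12 - k) * (a (k + 1) - a k) := by
    exact_mod_cast diffSum_eq_sum_mul_gaps a 12
  rw [sum_range_sub a 12, ← gap_sum] at upper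
  have span : a 12 - a 0 ≤ 85 := by
    linarith [(hsub (haS 12 le_rfl)).2, (hsub (haS 0 (by norm_num))).1]
  norm_num [Nat.choose_two_right] at lower
  linarith
end

section
/- If S₁ and S₂ are the only two Sidon sets of size 12 contained in [1,86], then S₁ ∩ S₂ ≠ ∅; consequently any partition of [1,86] into Sidon sets contains at most one part of size 12. -/
def IsSidonSubset (n : ℤ) (m : ℕ) (T : Finset ℤ) : Prop :=
  (T : Set ℤ) ⊆ Set.Icc 1 n ∧ IsSidon (T : Set ℤ) ∧ T.card = m

theorem IsSidon.image {S : Set ℤ} (hS : IsSidon S) {f : ℤ → ℤ}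
    (hf : ∀ a b c d, f a + f b = f c + f d → a + b = c + d) : IsSidon (f '' S) := by
  rintro _ ⟨a, ha, rfl⟩ _ ⟨b, hb, rfl⟩ _ ⟨c, hc, rfl⟩ _ ⟨d, hd, rfl⟩ h
  rw [← Set.image_pair, ← Set.image_pair, hS a ha b hb c hc d hd (hf a b c d h)]

theorem IsSidon.card_le_two_of_forall_sub_mem {S : Finset ℤ} (hS : IsSidon (S : Set ℤ)) {k : ℤ}
    (hsymm : ∀ x ∈ S, k - x ∈ S) : S.card ≤ 2 := by
  by_contra! hcard
  obtain ⟨a, ha, b, hb, c, hc, hab, hac, hbc⟩ := Finset.two_lt_card.mp hcard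
  have sum_eq : ∀ y ∈ S, a ≠ y → a + y = k := fun y hy hay => by
    have := Set.pair_eq_pair_iff.mp
      (hS a ha (k - a) (hsymm a ha) y hy (k - y) (hsymm y hy) (by ring))
    omega
  have := sum_eq b hb hab
  have := sum_eq c hc hac
  omega

theorem Finset.image_add_right_ne_self {S : Finset ℤ} (hS : S.Nonempty) {t : ℤ} (ht : t ≠ 0) :
    S.image (· + t) ≠ S := by
  intro h
  have hsum := congrArg (fun T : Finset ℤ => ∑ x ∈ T, x) h
  simp only [Finset.sum_image fun x _ y _ => add_right_cancel, Finset.sum_add_distrib,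
    Finset.sum_const, add_eq_left, smul_eq_zero, Finset.card_eq_zero] at hsum
  exact hsum.elim hS.ne_empty ht

theorem IsSidon.image_add_right_ne_image_sub_left {S : Finset ℤ} (hS : IsSidon (S : Set ℤ))
    (hcard : 2 < S.card) (t c : ℤ) : S.image (· + t) ≠ S.image (c - ·) := by
  intro h
  refine (hS.card_le_two_of_forall_sub_mem (k := c - t) fun x hx => ?_).not_gt hcard
  obtain ⟨y, hy, hxy⟩ := Finset.mem_image.mp (h ▸ Finset.mem_image_of_mem (· + t) hx)
  convert hy using 1
  omega

namespace IsSidonSubset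

variable {n : ℤ} {m : ℕ} {S : Finset ℤ}

theorem image_sub_left (h : IsSidonSubset n m S) : IsSidonSubset n m (S.image (n + 1 - ·)) := by
  obtain ⟨hsub, hS, hcard⟩ := h
  refine ⟨?_, ?_, ?_⟩
  · rw [Finset.coe_image]
    rintro _ ⟨x, hx, rfl⟩
    obtain ⟨_, _⟩ := hsub hx
    simp only [Set.mem_Icc]
    omega
  · rw [Finset.coe_image]
    exact hS.image fun a b c d h => by omega
  · rwa [Finset.card_image_of_injective _ sub_right_injective]

theorem image_add_right (h : IsSidonSubset n m S) {t : ℤ}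
    (hrange : ∀ x ∈ S, 1 ≤ x + t ∧ x + t ≤ n) : IsSidonSubset n m (S.image (· + t)) := by
  obtain ⟨-, hS, hcard⟩ := h
  refine ⟨?_, ?_, ?_⟩
  · rw [Finset.coe_image]
    rintro _ ⟨x, hx, rfl⟩
    exact hrange x hx
  · rw [Finset.coe_image]
    exact hS.image fun a b c d h => by omega
  · rwa [Finset.card_image_of_injective _ (add_left_injective t)]

theorem one_mem_of_forall_eq_or_eq (hm : 3 ≤ m) {S₁ S₂ : Finset ℤ}
    (hS₁ : IsSidonSubset n m S₁) (honly : ∀ T, IsSidonSubset n m T → T = S₁ ∨ T = S₂) :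
    1 ∈ S₁ ∧ 1 ∈ S₂ := by
  have hcard : 2 < S₁.card := by rw [hS₁.2.2]; omega
  have hne : S₁.Nonempty := Finset.card_pos.mp (by omega)
  have hreflect : S₁.image (n + 1 - ·) = S₂ := by
    refine (honly _ hS₁.image_sub_left).resolve_left fun h => ?_
    refine hS₁.2.1.image_add_right_ne_image_sub_left hcard 0 (n + 1) ?_
    simpa only [add_zero, Finset.image_id'] using h.symm
  have no_shift : ∀ t ≠ 0, ¬ IsSidonSubset n m (S₁.image (· + t)) := fun t ht hshift =>
    (honly _ hshift).elim (Finset.image_add_right_ne_self hne ht)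
      (hreflect ▸ hS₁.2.1.image_add_right_ne_image_sub_left hcard t (n + 1))
  have h1 : 1 ∈ S₁ := by
    by_contra h1
    refine no_shift (-1) (by norm_num) (hS₁.image_add_right fun x hx => ?_)
    obtain ⟨_, _⟩ := hS₁.1 hx
    have : x ≠ 1 := by rintro rfl; exact h1 hx
    omega
  have hn : n ∈ S₁ := by
    by_contra hn
    refine no_shift 1 one_ne_zero (hS₁.image_add_right fun x hx => ?_)
    obtain ⟨_, _⟩ := hS₁.1 hx
    have : x ≠ n := by rintro rfl; exact hn hx
    omega
  exact ⟨h1, hreflect ▸ Finset.mem_image.mpr ⟨n, hn, by ring⟩⟩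

end IsSidonSubset

theorem only_two_12SS_intersect_general (S₁ S₂ : Finset ℤ)
    (h₁ : (S₁ : Set ℤ) ⊆ Set.Icc 1 86) (hS₁ : IsSidon (S₁ : Set ℤ)) (hc₁ : S₁.card = 12)
    (honly : ∀ T : Finset ℤ, (T : Set ℤ) ⊆ Set.Icc 1 86 → IsSidon (T : Set ℤ) →
      T.card = 12 → T = S₁ ∨ T = S₂) :
    S₁ ∩ S₂ ≠ ∅ ∧
    ∀ k : ℕ, ∀ P : Fin k → Finset ℤ,
      (∀ i, IsSidon ((P i : Set ℤ))) →
      (∀ i j, i ≠ j → Disjoint (P i) (P j)) →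
      Finset.univ.biUnion P = Finset.Icc (1 : ℤ) 86 →
      ∀ i j, (P i).card = 12 → (P j).card = 12 → i = j := by
  have honly' : ∀ T, IsSidonSubset 86 12 T → T = S₁ ∨ T = S₂ :=
    fun T hT => honly T hT.1 hT.2.1 hT.2.2
  obtain ⟨h1₁, h1₂⟩ := IsSidonSubset.one_mem_of_forall_eq_or_eq (by norm_num) ⟨h₁, hS₁, hc₁⟩ honly'
  have one_mem : ∀ T, IsSidonSubset 86 12 T → 1 ∈ T := fun T hT =>
    (honly' T hT).elim (· ▸ h1₁) (· ▸ h1₂)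
  refine ⟨Finset.nonempty_iff_ne_empty.mp ⟨1, Finset.mem_inter.mpr ⟨h1₁, h1₂⟩⟩, ?_⟩
  intro k P hP hdisj hunion i j hi hj
  have hsub : ∀ l, (P l : Set ℤ) ⊆ Set.Icc 1 86 := fun l => by
    rw [← Finset.coe_Icc, ← hunion, Finset.coe_subset]
    exact Finset.subset_biUnion_of_mem P (Finset.mem_univ l)
  by_contra hij
  exact Finset.disjoint_left.mp (hdisj i j hij) (one_mem _ ⟨hsub i, hP i, hi⟩)
    (one_mem _ ⟨hsub j, hP j, hj⟩)

theorem only_two_12SS_intersect (S₁ S₂ : Finset ℤ)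
    (h₁ : (S₁ : Set ℤ) ⊆ Set.Icc 1 86) (hS₁ : IsSidon (S₁ : Set ℤ)) (hc₁ : S₁.card = 12)
    (h₂ : (S₂ : Set ℤ) ⊆ Set.Icc 1 86) (hS₂ : IsSidon (S₂ : Set ℤ)) (hc₂ : S₂.card = 12)
    (hne : S₁ ≠ S₂)
    (honly : ∀ T : Finset ℤ, (T : Set ℤ) ⊆ Set.Icc 1 86 → IsSidon (T : Set ℤ) →
      T.card = 12 → T = S₁ ∨ T = S₂) :
    S₁ ∩ S₂ ≠ ∅ ∧
    ∀ k : ℕ, ∀ P : Fin k → Finset ℤ,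
      (∀ i, IsSidon ((P i : Set ℤ))) →
      (∀ i j, i ≠ j → Disjoint (P i) (P j)) →
      Finset.univ.biUnion P = Finset.Icc (1 : ℤ) 86 →
      ∀ i j, (P i).card = 12 → (P j).card = 12 → i = j :=
  only_two_12SS_intersect_general S₁ S₂ h₁ hS₁ hc₁ honly
end

section
/- The partition of [1,65] into the 7 sets {1,3,15,22,30,33,46,50,55,56}, {2,9,17,21,26,27,47,49,60,63}, {4,7,12,16,31,41,42,48,62,64}, {5,11,14,28,32,39,44,52,54}, {6,19,23,24,34,43,57,59,65}, {8,10,20,36,37,40,45,51,58}, {13,18,25,29,35,38,53,61} is a partition into Sidon sets in which two parts have sizes differing by 2 (it is not balanced). -/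
-- `a + b = c + d` with `a ≠ c` makes `(a, c)` and `(d, b)` off-diagonal pairs with equal differences.
theorem isSidon_of_card_image_sub_offDiag (s : Finset ℤ)
    (h : (s.offDiag.image fun p : ℤ × ℤ => p.1 - p.2).card = s.offDiag.card) :
    IsSidon (s : Set ℤ) := by
  intro a ha b hb c hc d hd habcd
  by_cases hac : a = c
  · obtain rfl : b = d := by omega
    rw [hac]
  have hdb : d ≠ b := by omega
  have hpairs : (a, c) = (d, b) := Finset.card_image_iff.mp h
    (Finset.mem_offDiag.mpr ⟨ha, hc, hac⟩) (Finset.mem_offDiag.mpr ⟨hd, hb, hdb⟩)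
    (show a - c = d - b by omega)
  obtain ⟨rfl, rfl⟩ := Prod.ext_iff.mp hpairs
  exact Set.pair_comm _ _

theorem unbalanced_partition_65 :
    (∀ i, IsSidon (((![({1,3,15,22,30,33,46,50,55,56} : Finset ℤ),
         {2,9,17,21,26,27,47,49,60,63},
         {4,7,12,16,31,41,42,48,62,64},
         {5,11,14,28,32,39,44,52,54},
         {6,19,23,24,34,43,57,59,65},
         {8,10,20,36,37,40,45,51,58},
         {13,18,25,29,35,38,53,61}] : Fin 7 → Finset ℤ) i : Set ℤ))) ∧
    (∀ i j : Fin 7, i ≠ j → Disjoint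
      ((![({1,3,15,22,30,33,46,50,55,56} : Finset ℤ),
         {2,9,17,21,26,27,47,49,60,63},
         {4,7,12,16,31,41,42,48,62,64},
         {5,11,14,28,32,39,44,52,54},
         {6,19,23,24,34,43,57,59,65},
         {8,10,20,36,37,40,45,51,58},
         {13,18,25,29,35,38,53,61}] : Fin 7 → Finset ℤ) i)
      ((![({1,3,15,22,30,33,46,50,55,56} : Finset ℤ),
         {2,9,17,21,26,27,47,49,60,63},
         {4,7,12,16,31,41,42,48,62,64},
         {5,11,14,28,32,39,44,52,54},
         {6,19,23,24,34,43,57,59,65},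
         {8,10,20,36,37,40,45,51,58},
         {13,18,25,29,35,38,53,61}] : Fin 7 → Finset ℤ) j)) ∧
    (Finset.univ.biUnion (![({1,3,15,22,30,33,46,50,55,56} : Finset ℤ),
         {2,9,17,21,26,27,47,49,60,63},
         {4,7,12,16,31,41,42,48,62,64},
         {5,11,14,28,32,39,44,52,54},
         {6,19,23,24,34,43,57,59,65},
         {8,10,20,36,37,40,45,51,58},
         {13,18,25,29,35,38,53,61}] : Fin 7 → Finset ℤ) = Finset.Icc (1 : ℤ) 65) ∧
    (({1,3,15,22,30,33,46,50,55,56} : Finset ℤ).card =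
      ({13,18,25,29,35,38,53,61} : Finset ℤ).card + 2) := by
  refine ⟨fun i => isSidon_of_card_image_sub_offDiag _ ?_, by decide, by decide, by decide⟩
  fin_cases i <;> decide
end

section
/- The unique partition of [1,50] into 6 Sidon sets cannot be extended to a partition of [1,51] into 6 Sidon sets: for each of the 6 parts, adding the element 51 to that part destroys the Sidon property. -/
theorem not_isSidon_of_add_eq {S : Set ℤ} {a b c d : ℤ} (ha : a ∈ S) (hb : b ∈ S) (hc : c ∈ S)
    (hd : d ∈ S) (h : a + b = c + d) (hac : a ≠ c) (had : a ≠ d) : ¬ IsSidon S := by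
  intro hS
  have ha_mem : a ∈ ({c, d} : Set ℤ) := hS a ha b hb c hc d hd h ▸ Set.mem_insert a {b}
  rcases ha_mem with rfl | rfl
  exacts [hac rfl, had rfl]

theorem no_extension_to_51 :
    ¬ IsSidon (insert (51 : ℤ) {4,6,14,28,29,33,40,46,49}) ∧
    ¬ IsSidon (insert (51 : ℤ) {2,5,11,18,22,23,37,45,47}) ∧
    ¬ IsSidon (insert (51 : ℤ) {3,7,8,24,30,32,39,42}) ∧
    ¬ IsSidon (insert (51 : ℤ) {1,13,15,26,31,34,35,41}) ∧
    ¬ IsSidon (insert (51 : ℤ) {9,12,19,21,27,43,44,48}) ∧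
    ¬ IsSidon (insert (51 : ℤ) {10,16,17,20,25,36,38,50}) := by
  refine ⟨not_isSidon_of_add_eq (a := 51) (b := 4) (c := 6) (d := 49) ?_ ?_ ?_ ?_ ?_ ?_ ?_,
    not_isSidon_of_add_eq (a := 51) (b := 5) (c := 11) (d := 45) ?_ ?_ ?_ ?_ ?_ ?_ ?_,
    not_isSidon_of_add_eq (a := 51) (b := 3) (c := 24) (d := 30) ?_ ?_ ?_ ?_ ?_ ?_ ?_,
    not_isSidon_of_add_eq (a := 51) (b := 15) (c := 31) (d := 35) ?_ ?_ ?_ ?_ ?_ ?_ ?_,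
    not_isSidon_of_add_eq (a := 51) (b := 9) (c := 12) (d := 48) ?_ ?_ ?_ ?_ ?_ ?_ ?_,
    not_isSidon_of_add_eq (a := 51) (b := 10) (c := 25) (d := 36) ?_ ?_ ?_ ?_ ?_ ?_ ?_⟩ <;>
  norm_num
end
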